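/- arXiv:2302.09496 — 14 statements merged into one kernel-verified Lean document; each statement's English description precedes it below -/
import Mathlib

section
/- The multiplication on M̄_n is associative, and the element 1 := (1,0,n) belongs to M̄_n and satisfies 1·x = x·1 = x for every x ∈ M̄_n; moreover 0·x = x·0 = 0 for every x ∈ M̄_n. Hence M̄_n is a monoid with zero. -/
noncomputable section

/-- Elements of the monoid: `none` is the zero element, `some (k, d, m)` a triple. -/
abbrev El := Option (ℝ × ℝ × ℝ)

/-- Membership in `M̄_n`. -/
def inM (n : ℕ) : El → Prop
  | none => True
  | some (k, d, m) => 1 - min 0 d ≤ k ∧ k ≤ m ∧ m ≤ (n : ℝ) - max 0 d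

/-- The product on `M̄_n`. -/
def mul : El → El → El
  | some (k, d, m), some (k', d', m') =>
      if max k (k' - d) ≤ min m (m' - d) then
        some (max k (k' - d), d + d', min m (m' - d))
      else none
  | _, _ => none

/-- The transpose (semigroup inverse). -/
def transp : El → El
  | none => none
  | some (k, d, m) => some (k + d, -d, m + d)

/-- The height function. -/
def height : El → ℝ
  | none => -1
  | some (k, _, m) => m - k

/-- `pw x j` is the `(j+1)`-st power of `x` (so `pw x 0 = x`). -/
def pw (x : El) : ℕ → El
  | 0 => x
  | j + 1 => mul (pw x j) x

lemma maxs' (a b c : ℝ) : a ⊔ b - c = (a - c) ⊔ (b - c) := (max_sub_sub_right a b c).symm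
lemma mins' (a b c : ℝ) : a ⊓ b - c = (a - c) ⊓ (b - c) := (min_sub_sub_right a b c).symm

/-- the multiplication on M̄_n is associative on M̄_n (which is
closed under it), the element 1 = (1,0,n) belongs to M̄_n and is a two-sided
identity, and 0 is a two-sided absorbing element; hence M̄_n is a monoid with zero. -/
theorem stmt0 (n : ℕ) (hn : 2 ≤ n) :
    (∀ x y : El, inM n x → inM n y → inM n (mul x y)) ∧
    (∀ x y z : El, inM n x → inM n y → inM n z →
      mul (mul x y) z = mul x (mul y z)) ∧
    inM n (some (1, 0, (n : ℝ))) ∧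
    (∀ x : El, inM n x →
      mul (some (1, 0, (n : ℝ))) x = x ∧ mul x (some (1, 0, (n : ℝ))) = x) ∧
    (∀ x : El, inM n x → mul none x = none ∧ mul x none = none) := by
  have hn' : (2 : ℝ) ≤ n := by exact_mod_cast hn
  refine ⟨?_, ?_, ?_, ?_, ?_⟩
  · -- closure
    rintro (_ | ⟨k, d, m⟩) (_ | ⟨k', d', m'⟩) hx hy <;> simp only [mul, inM] at * <;>
      try trivial
    split_ifs with h
    · obtain ⟨h1, h2, h3⟩ := hx
      obtain ⟨h1', h2', h3'⟩ := hy
      simp only [inM]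
      refine ⟨?_, h, ?_⟩ <;>
      · simp only [min_def, max_def] at *
        split_ifs at * <;> linarith
    · simp [inM]
  · -- associativity
    rintro x y z - - -
    obtain _ | ⟨⟨k, d, m⟩⟩ := x <;> obtain _ | ⟨⟨k', d', m'⟩⟩ := y <;>
      obtain _ | ⟨⟨k'', d'', m''⟩⟩ := z <;> simp only [mul] <;>
      split_ifs <;> simp only [mul] <;> split_ifs <;>
      first
      | rfl
      | (simp only [Option.some.injEq, Prod.mk.injEq]
         refine ⟨?_, by ring, ?_⟩
         · rw [show k'' - (d + d') = k'' - d' - d by ring, ← max_sub_sub_right, max_assoc]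
         · rw [show m'' - (d + d') = m'' - d' - d by ring, ← min_sub_sub_right, min_assoc])
      | (exfalso
         simp only [maxs', mins', max_le_iff, le_min_iff, not_and_or, not_le,
           min_lt_iff, lt_max_iff] at *
         casesm* _ ∨ _, _ ∧ _ <;> linarith)
  · -- identity in M
    simp only [inM, min_self, max_self, sub_zero]
    exact ⟨le_refl 1, by linarith, le_refl _⟩
  · -- identity laws
    rintro (_ | ⟨k, d, m⟩) hx
    · simp [mul]
    · obtain ⟨h1, h2, h3⟩ := hx
      have hmin : min (0:ℝ) d ≤ 0 := min_le_left _ _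
      have hmax : (0:ℝ) ≤ max 0 d := le_max_left _ _
      have hk1 : (1 : ℝ) ≤ k := by linarith
      have hmn : m ≤ (n : ℝ) := by linarith
      have h1d : 1 - d ≤ k := by
        rcases le_total 0 d with h | h
        · linarith
        · rw [min_eq_right h] at h1; linarith
      have hnd : m ≤ (n : ℝ) - d := by
        rcases le_total 0 d with h | h
        · rw [max_eq_right h] at h3; linarith
        · linarith
      constructor
      · simp only [mul, sub_zero, zero_add]
        rw [if_pos (by
          simp only [max_le_iff, le_min_iff]
          exact ⟨⟨by linarith, by linarith⟩, ⟨by linarith, h2⟩⟩)]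
        rw [max_eq_right hk1, min_eq_right hmn]
      · simp only [mul, add_zero]
        rw [if_pos (by
          simp only [max_le_iff, le_min_iff]
          exact ⟨⟨h2, by linarith⟩, ⟨by linarith, by linarith⟩⟩)]
        rw [max_eq_left h1d, min_eq_left hnd]
  · rintro x -; exact ⟨rfl, by cases x <;> rfl⟩
end
end

section
/- For every x ∈ M̄_n one has x·x^T·x = x and x^T·x·x^T = x^T, and x^T is the unique element y ∈ M̄_n satisfying x·y·x = x and y·x·y = y. Furthermore, the idempotents of M̄_n are exactly 0 together with the triples (k,0,m) (those with middle coordinate d = 0), and any two idempotents of M̄_n commute; thus M̄_n is an inverse monoid. -/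
noncomputable section

lemma mul_some (k d m k' d' m' : ℝ) :
    mul (some (k, d, m)) (some (k', d', m')) =
      if max k (k' - d) ≤ min m (m' - d) then
        some (max k (k' - d), d + d', min m (m' - d))
      else none := rfl

lemma mul_none_left (x : El) : mul none x = none := by
  rcases x with _ | ⟨k, d, m⟩ <;> rfl

lemma mul_none_right (x : El) : mul x none = none := by
  rcases x with _ | ⟨k, d, m⟩ <;> rfl

lemma idem_d {k d m : ℝ} (h : mul (some (k, d, m)) (some (k, d, m)) = some (k, d, m)) :
    d = 0 := by
  rw [mul_some] at h
  by_cases hc : max k (k - d) ≤ min m (m - d)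
  · rw [if_pos hc] at h
    simp only [Option.some.injEq, Prod.mk.injEq] at h
    linarith [h.2.1]
  · rw [if_neg hc] at h
    exact absurd h (by simp)

/-- x·xᵀ·x = x and xᵀ·x·xᵀ = xᵀ; xᵀ is the unique inverse of x;
the idempotents are exactly 0 and the triples with d = 0; idempotents commute.
Thus M̄_n is an inverse monoid. -/
theorem stmt1 (n : ℕ) (hn : 2 ≤ n) :
    (∀ x : El, inM n x →
      mul (mul x (transp x)) x = x ∧ mul (mul (transp x) x) (transp x) = transp x) ∧
    (∀ x y : El, inM n x → inM n y →
      mul (mul x y) x = x → mul (mul y x) y = y → y = transp x) ∧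
    (∀ e : El, inM n e →
      (mul e e = e ↔ e = none ∨ ∃ k m : ℝ, e = some (k, 0, m))) ∧
    (∀ e f : El, inM n e → inM n f → mul e e = e → mul f f = f →
      mul e f = mul f e) := by
  refine ⟨?_, ?_, ?_, ?_⟩
  · -- x xᵀ x = x and xᵀ x xᵀ = xᵀ
    rintro (_ | ⟨k, d, m⟩) hx
    · simp [transp, mul_none_left]
    · obtain ⟨h1, hkm, h3⟩ := hx
      constructor
      · show mul (mul _ _) _ = _
        rw [show transp (some (k, d, m)) = some (k + d, -d, m + d) from rfl, mul_some]
        simp only [add_sub_cancel_right, max_self, min_self, add_neg_cancel]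
        rw [if_pos hkm, mul_some]
        simp only [sub_zero, max_self, min_self, zero_add]
        rw [if_pos hkm]
      · show mul (mul _ _) _ = _
        rw [show transp (some (k, d, m)) = some (k + d, -d, m + d) from rfl, mul_some]
        simp only [sub_neg_eq_add, max_self, min_self, neg_add_cancel]
        rw [if_pos (by linarith : k + d ≤ m + d), mul_some]
        simp only [add_sub_cancel_right, sub_zero, max_self, min_self, zero_add]
        rw [if_pos (by linarith : k + d ≤ m + d)]
  · -- uniqueness of the inverse
    rintro (_ | ⟨k, d, m⟩) (_ | ⟨k', d', m'⟩) hx hy h1 h2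
    · rfl
    · rw [mul_none_right, mul_none_left] at h2
      exact absurd h2 (by simp)
    · rw [mul_none_right, mul_none_left] at h1
      exact absurd h1 (by simp)
    · obtain ⟨_, hkm, _⟩ := hx
      obtain ⟨_, hkm', _⟩ := hy
      rw [mul_some] at h1
      by_cases hc : max k (k' - d) ≤ min m (m' - d)
      · rw [if_pos hc, mul_some] at h1
        by_cases hc2 : max (max k (k' - d)) (k - (d + d')) ≤
            min (min m (m' - d)) (m - (d + d'))
        · rw [if_pos hc2] at h1
          simp only [Option.some.injEq, Prod.mk.injEq] at h1
          obtain ⟨e1, e2, e3⟩ := h1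
          have hd' : d' = -d := by linarith
          have hdd : d + d' = 0 := by linarith
          rw [hdd, sub_zero] at e1 e3
          have hA : max k (k' - d) ≤ k := by
            calc max k (k' - d) ≤ max (max k (k' - d)) k := le_max_left _ _
            _ = k := e1
          have hk' : k' - d ≤ k := le_of_max_le_right hA
          have hB : m ≤ min m (m' - d) := by
            calc m = min (min m (m' - d)) m := e3.symm
            _ ≤ min m (m' - d) := min_le_left _ _
          have hm' : m ≤ m' - d := le_trans hB (min_le_right _ _)
          subst hd'
          rw [mul_some] at h2
          simp only [sub_neg_eq_add] at h2
          rw [max_eq_right (by linarith : k' ≤ k + d),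
            min_eq_right (by linarith : m + d ≤ m'),
            if_pos (by linarith : k + d ≤ m + d)] at h2
          simp only [neg_add_cancel] at h2
          rw [mul_some] at h2
          simp only [sub_zero] at h2
          rw [max_eq_left (by linarith : k' ≤ k + d),
            min_eq_left (by linarith : m + d ≤ m'),
            if_pos (by linarith : k + d ≤ m + d)] at h2
          simp only [zero_add] at h2
          rw [show transp (some (k, d, m)) = some (k + d, -d, m + d) from rfl]
          exact h2.symm
        · rw [if_neg hc2] at h1
          exact absurd h1 (by simp)
      · rw [if_neg hc, mul_none_left] at h1
        exact absurd h1 (by simp)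
  · -- idempotents
    rintro (_ | ⟨k, d, m⟩) he
    · simp [mul_none_left]
    · obtain ⟨_, hkm, _⟩ := he
      constructor
      · intro h
        have hd : d = 0 := idem_d h
        exact Or.inr ⟨k, m, by rw [hd]⟩
      · rintro (h | ⟨k0, m0, h⟩)
        · exact absurd h (by simp)
        · simp only [Option.some.injEq, Prod.mk.injEq] at h
          obtain ⟨rfl, hd, rfl⟩ := h
          rw [hd, mul_some]
          simp only [sub_zero, max_self, min_self, add_zero]
          rw [if_pos hkm]
  · -- idempotents commute
    rintro (_ | ⟨k, d, m⟩) (_ | ⟨k', d', m'⟩) he hf h1 h2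
    · rfl
    · rw [mul_none_left, mul_none_right]
    · rw [mul_none_left, mul_none_right]
    · have hd : d = 0 := idem_d h1
      have hd' : d' = 0 := idem_d h2
      subst hd; subst hd'
      rw [mul_some, mul_some]
      simp only [sub_zero, add_zero, max_comm k k', min_comm m m']
end
end

section
/- Let x = (k,d,m) be a nonzero element of M̄_n and let j ≥ 1 be a natural number. Set k⁽ʲ⁾ = k − (j−1)·min(0,d), d⁽ʲ⁾ = j·d, m⁽ʲ⁾ = m − (j−1)·max(0,d). Then the j-th power of x in M̄_n equals (k⁽ʲ⁾, d⁽ʲ⁾, m⁽ʲ⁾) if k⁽ʲ⁾ ≤ m⁽ʲ⁾, and equals 0 if k⁽ʲ⁾ > m⁽ʲ⁾. In particular, x·x = x if and only if d = 0. -/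
noncomputable section

/-- formula for the j-th power (j ≥ 1) of a nonzero element of M̄_n,
and x·x = x iff d = 0.  Here `pw x (j-1)` is the j-th power of x. -/
theorem stmt2 (n : ℕ) (hn : 2 ≤ n) (k d m : ℝ)
    (hx : inM n (some (k, d, m))) (j : ℕ) (hj : 1 ≤ j) :
    (pw (some (k, d, m)) (j - 1) =
      if k - ((j : ℝ) - 1) * min 0 d ≤ m - ((j : ℝ) - 1) * max 0 d then
        some (k - ((j : ℝ) - 1) * min 0 d, (j : ℝ) * d, m - ((j : ℝ) - 1) * max 0 d)
      else none) ∧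
    (mul (some (k, d, m)) (some (k, d, m)) = some (k, d, m) ↔ d = 0) := by
  have hkm : k ≤ m := hx.2.1
  have key : ∀ i : ℕ, pw (some (k, d, m)) i =
      if k - (i : ℝ) * min 0 d ≤ m - (i : ℝ) * max 0 d then
        some (k - (i : ℝ) * min 0 d, ((i : ℝ) + 1) * d, m - (i : ℝ) * max 0 d)
      else none := by
    intro i
    induction i with
    | zero => simp [pw, hkm]
    | succ i ih =>
      have hi : (0 : ℝ) ≤ (i : ℝ) := Nat.cast_nonneg i
      have hmax : max (k - (i : ℝ) * min 0 d) (k - ((i : ℝ) + 1) * d)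
          = k - ((i : ℝ) + 1) * min 0 d := by
        rcases le_total 0 d with h | h
        · rw [min_eq_left h, max_eq_left]
          · ring_nf
          · nlinarith
        · rw [min_eq_right h, max_eq_right]
          nlinarith
      have hmin : min (m - (i : ℝ) * max 0 d) (m - ((i : ℝ) + 1) * d)
          = m - ((i : ℝ) + 1) * max 0 d := by
        rcases le_total 0 d with h | h
        · rw [max_eq_right h, min_eq_right]
          nlinarith
        · rw [max_eq_left h, min_eq_left]
          · ring_nf
          · nlinarith
      rw [pw, ih]
      rcases le_or_gt (k - (i : ℝ) * min 0 d) (m - (i : ℝ) * max 0 d) with h1 | h1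
      · rw [if_pos h1]
        have hstep : mul (some (k - (i : ℝ) * min 0 d, ((i : ℝ) + 1) * d,
            m - (i : ℝ) * max 0 d)) (some (k, d, m)) =
            if max (k - (i : ℝ) * min 0 d) (k - ((i : ℝ) + 1) * d) ≤
                min (m - (i : ℝ) * max 0 d) (m - ((i : ℝ) + 1) * d) then
              some (max (k - (i : ℝ) * min 0 d) (k - ((i : ℝ) + 1) * d),
                ((i : ℝ) + 1) * d + d,
                min (m - (i : ℝ) * max 0 d) (m - ((i : ℝ) + 1) * d))
            else none := by
          show (if _ then _ else _) = _
          congr 2 <;> ring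
        rw [hstep, hmax, hmin]
        push_cast
        split_ifs with h2
        · simp only [Option.some.injEq, Prod.mk.injEq, eq_self_iff_true,
            true_and, and_true]
          ring
        · rfl
      · rw [if_neg (not_le.mpr h1)]
        have hnone : mul (none : El) (some (k, d, m)) = none := rfl
        rw [hnone, if_neg]
        have hmd : min 0 d ≤ max 0 d := le_trans (min_le_left 0 d) (le_max_left 0 d)
        push_cast
        intro hc
        exact absurd (by nlinarith : k - (i : ℝ) * min 0 d ≤ m - (i : ℝ) * max 0 d)
          (not_le.mpr h1)
  constructor
  · have hk := key (j - 1)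
    have hc : ((j - 1 : ℕ) : ℝ) = (j : ℝ) - 1 := by
      rw [Nat.cast_sub hj, Nat.cast_one]
    rw [hk, hc]
    have he : ((j : ℝ) - 1 + 1) * d = (j : ℝ) * d := by ring
    rw [he]
  · have hmm : mul (some (k, d, m)) (some (k, d, m)) =
        if max k (k - d) ≤ min m (m - d) then
          some (max k (k - d), d + d, min m (m - d)) else none := rfl
    rw [hmm]
    constructor
    · intro h
      split_ifs at h with h1
      · have := Option.some.inj h
        have hd : d + d = d := congrArg (fun p => p.2.1) this
        linarith
    · intro hd
      subst hd
      simp [hkm]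
end
end

section
/- The inverse monoid M̄_n is E*-unitary: if x, y ∈ M̄_n with x ≠ 0, x·x = x (x is idempotent), and x = (x·x^T)·y (i.e., x ≤ y in the natural partial order), then y·y = y (y is idempotent). -/
noncomputable section

/-- M̄_n is E*-unitary: a nonzero idempotent below y in the natural
partial order forces y to be idempotent. -/
theorem stmt4 (n : ℕ) (hn : 2 ≤ n) (x y : El)
    (hx : inM n x) (hy : inM n y) (hx0 : x ≠ none)
    (hxe : mul x x = x) (hle : x = mul (mul x (transp x)) y) :
    mul y y = y := by
  obtain (_|⟨k,d,m⟩) := x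
  · exact absurd rfl hx0
  have hd : d = 0 := by
    simp only [mul] at hxe
    split_ifs at hxe with h
    have h2 : d + d = d := congrArg (fun p => (p.getD (0,0,0)).2.1) hxe
    linarith
  subst hd
  obtain (_|⟨k',d',m'⟩) := y
  · have hz : mul (mul (some (k,0,m)) (transp (some (k,0,m)))) none = none := by
      cases mul (some (k,0,m)) (transp (some (k,0,m))) <;> rfl
    rw [hz] at hle
    exact absurd hle hx0
  have hxx : mul (some (k,(0:ℝ),m)) (transp (some (k,(0:ℝ),m))) = some (k,0,m) := by
    simpa [transp, mul] using hxe
  rw [hxx] at hle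
  simp only [mul, sub_zero] at hle
  split_ifs at hle with h
  have hd' : d' = 0 := by
    have h2 : (0:ℝ) = 0 + d' := congrArg (fun p => (p.getD (0,0,0)).2.1) hle
    linarith
  subst hd'
  have hk'm' : k' ≤ m' := hy.2.1
  simp [mul, hk'm']
end
end

section
/- Let n, q ≥ 2 be integers. The map φ : M̄_n → M̄_q defined by φ(0) = 0 and φ((k,d,m)) = (1 + (q−1)/(n−1)·(k−1), (q−1)/(n−1)·d, 1 + (q−1)/(n−1)·(m−1)) is well defined, bijective, satisfies φ(x·y) = φ(x)·φ(y) for all x, y ∈ M̄_n, and maps the identity (1,0,n) of M̄_n to the identity (1,0,q) of M̄_q. Hence M̄_n and M̄_q are isomorphic monoids for all n, q ≥ 2. -/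
/-!
With `c = (q - 1) / (n - 1) > 0`, `φ` moves the coordinates `k`, `m` by the increasing affine map
`t ↦ 1 + c (t - 1)` and `d` by its linear part `t ↦ c t`. Such a map commutes with `max`, `min` and
`≤`, hence with the product, and it carries the defining inequalities of `M̄_n` to those of `M̄_q`.
The same construction with `c⁻¹` inverts it.
-/

noncomputable section

/-- The affine map from M̄_n to M̄_q. -/
def phi7 (n q : ℕ) : El → El
  | none => none
  | some (k, d, m) =>
      some (1 + ((q : ℝ) - 1) / ((n : ℝ) - 1) * (k - 1),
            ((q : ℝ) - 1) / ((n : ℝ) - 1) * d,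
            1 + ((q : ℝ) - 1) / ((n : ℝ) - 1) * (m - 1))

def rescale (c : ℝ) : El → El :=
  Option.map fun (k, d, m) => (1 + c * (k - 1), c * d, 1 + c * (m - 1))

theorem phi7_eq_rescale (n q : ℕ) : phi7 n q = rescale (((q : ℝ) - 1) / ((n : ℝ) - 1)) := by
  funext x
  rcases x with _ | ⟨k, d, m⟩ <;> rfl

theorem rescale_rescale (c c' : ℝ) (x : El) : rescale c (rescale c' x) = rescale (c * c') x := by
  rcases x with _ | ⟨k, d, m⟩
  · rfl
  · simp only [rescale, Option.map_some, Option.some.injEq, Prod.mk.injEq]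
    exact ⟨by ring, by ring, by ring⟩

theorem rescale_one (x : El) : rescale 1 x = x := by
  rcases x with _ | ⟨k, d, m⟩ <;> simp [rescale]

theorem rescale_mul {c : ℝ} (hc : 0 < c) (x y : El) :
    rescale c (mul x y) = mul (rescale c x) (rescale c y) := by
  rcases x with _ | ⟨k, d, m⟩ <;> rcases y with _ | ⟨k', d', m'⟩ <;> try rfl
  have hf : StrictMono fun t : ℝ => 1 + c * (t - 1) := fun a b hab => by simp only; gcongr
  have hmax : max (1 + c * (k - 1)) (1 + c * (k' - 1) - c * d) = 1 + c * (max k (k' - d) - 1) := by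
    rw [show 1 + c * (k' - 1) - c * d = 1 + c * (k' - d - 1) by ring]
    exact hf.monotone.map_max.symm
  have hmin : min (1 + c * (m - 1)) (1 + c * (m' - 1) - c * d) = 1 + c * (min m (m' - d) - 1) := by
    rw [show 1 + c * (m' - 1) - c * d = 1 + c * (m' - d - 1) by ring]
    exact hf.monotone.map_min.symm
  have hle (a b : ℝ) : 1 + c * (a - 1) ≤ 1 + c * (b - 1) ↔ a ≤ b := hf.le_iff_le
  simp only [mul, rescale, Option.map_some, hmax, hmin, hle]
  split_ifs
  · simp only [Option.map_some, mul_add]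
  · rfl

theorem inM_rescale {n q : ℕ} {c : ℝ} (hc : 0 < c) (hcn : c * (n - 1) = q - 1) {x : El}
    (hx : inM n x) : inM q (rescale c x) := by
  rcases x with _ | ⟨k, d, m⟩
  · trivial
  obtain ⟨hk, hkm, hm⟩ := hx
  refine ⟨?_, ?_, ?_⟩
  · rw [← mul_zero c, ← mul_min_of_nonneg _ _ hc.le]
    nlinarith
  · nlinarith
  · rw [← mul_zero c, ← mul_max_of_nonneg _ _ hc.le]
    nlinarith

theorem bijOn_rescale {n q : ℕ} {c : ℝ} (hc : 0 < c) (hcn : c * (n - 1) = q - 1) :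
    Set.BijOn (rescale c) {x | inM n x} {x | inM q x} := by
  have hcq : c⁻¹ * (q - 1) = n - 1 := by rw [← hcn, inv_mul_cancel_left₀ hc.ne']
  refine Set.InvOn.bijOn (f' := rescale c⁻¹) ⟨fun x _ => ?_, fun x _ => ?_⟩
    (fun _ => inM_rescale hc hcn) (fun _ => inM_rescale (inv_pos.2 hc) hcq)
  · rw [rescale_rescale, inv_mul_cancel₀ hc.ne', rescale_one]
  · rw [rescale_rescale, mul_inv_cancel₀ hc.ne', rescale_one]

/-- φ is a well-defined bijection from M̄_n onto M̄_q, is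
multiplicative on M̄_n, and sends the identity (1,0,n) to the identity (1,0,q);
hence all the monoids M̄_n, n ≥ 2, are isomorphic. -/
theorem stmt7 (n q : ℕ) (hn : 2 ≤ n) (hq : 2 ≤ q) :
    Set.BijOn (phi7 n q) {x : El | inM n x} {x : El | inM q x} ∧
    (∀ x y : El, inM n x → inM n y →
      phi7 n q (mul x y) = mul (phi7 n q x) (phi7 n q y)) ∧
    phi7 n q (some (1, 0, (n : ℝ))) = some (1, 0, (q : ℝ)) := by
  have hn1 : (1 : ℝ) < n := by exact_mod_cast hn
  have hq1 : (1 : ℝ) < q := by exact_mod_cast hq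
  rw [phi7_eq_rescale]
  set c : ℝ := ((q : ℝ) - 1) / ((n : ℝ) - 1)
  have hc : 0 < c := div_pos (by linarith) (by linarith)
  have hcn : c * (n - 1) = q - 1 := div_mul_cancel₀ _ (by linarith)
  refine ⟨bijOn_rescale hc hcn, fun x y _ _ => rescale_mul hc x y, ?_⟩
  simp only [rescale, Option.map_some, sub_self, mul_zero, add_zero, hcn, add_sub_cancel]
end
end

section
/- Let x = (k,d,m) be a nonzero element of M̄_n with d ≠ 0, and let i = 2 + ⌊(m−k)/|d|⌋. Then x is nilpotent with index exactly i: the i-th power of x equals 0, while the (i−1)-st power of x is nonzero. In particular, if m = k then i = 2. -/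
noncomputable section

/-!
The power `pw x j = x ^ (j + 1)` of `x = (k, d, m)` keeps the shape
`(max k (k - j d), (j + 1) d, min m (m - j d))` for as long as it is nonzero, and it is nonzero
exactly while the interval `[k, m]` still meets its translate `[k - j d, m - j d]`, i.e. while
`j |d| ≤ m - k`. The first power that vanishes is therefore `x ^ (⌊(m - k) / |d|⌋₊ + 2)`.
-/

theorem sub_mul_mem_uIcc_sub_succ_mul (k d : ℝ) (j : ℕ) :
    k - j * d ∈ Set.uIcc k (k - (j + 1) * d) := by
  rw [Set.mem_uIcc]
  rcases le_total 0 d with hd | hd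
  · right; constructor <;> nlinarith
  · left; constructor <;> nlinarith

theorem max_max_sub_mul_sub_succ_mul (k d : ℝ) (j : ℕ) :
    max (max k (k - j * d)) (k - (j + 1) * d) = max k (k - (j + 1) * d) := by
  rw [max_right_comm, max_eq_left (sub_mul_mem_uIcc_sub_succ_mul k d j).2]

theorem min_min_sub_mul_sub_succ_mul (m d : ℝ) (j : ℕ) :
    min (min m (m - j * d)) (m - (j + 1) * d) = min m (m - (j + 1) * d) := by
  rw [min_right_comm, min_eq_left (sub_mul_mem_uIcc_sub_succ_mul m d j).1]

theorem max_le_min_sub_iff {k m : ℝ} (hkm : k ≤ m) (t : ℝ) :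
    max k (k - t) ≤ min m (m - t) ↔ |t| ≤ m - k := by
  simp only [max_le_iff, le_min_iff, abs_le]
  constructor
  · rintro ⟨⟨-, h₁⟩, h₂, -⟩
    constructor <;> linarith
  · rintro ⟨h₁, h₂⟩
    refine ⟨⟨hkm, ?_⟩, ?_, ?_⟩ <;> linarith

theorem pw_some_eq {k d m : ℝ} (hkm : k ≤ m) (j : ℕ) :
    pw (some (k, d, m)) j =
      if (j : ℝ) * |d| ≤ m - k then
        some (max k (k - j * d), (j + 1) * d, min m (m - j * d))
      else none := by
  induction j with
  | zero => simp [pw, hkm]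
  | succ j ih =>
    have hstep : ((j + 1 : ℕ) : ℝ) * |d| ≤ m - k ↔
        max k (k - (j + 1) * d) ≤ min m (m - (j + 1) * d) := by
      rw [max_le_min_sub_iff hkm, abs_mul, abs_of_nonneg (by positivity : (0 : ℝ) ≤ j + 1)]
      push_cast; rfl
    rw [pw, ih]
    by_cases hj : (j : ℝ) * |d| ≤ m - k
    · simp only [if_pos hj, mul, max_max_sub_mul_sub_succ_mul, min_min_sub_mul_sub_succ_mul,
        hstep]
      push_cast
      ring_nf
    · have hj' : ¬ ((j + 1 : ℕ) : ℝ) * |d| ≤ m - k := fun h ↦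
        hj (le_trans (by push_cast; nlinarith [abs_nonneg d]) h)
      rw [if_neg hj, if_neg hj']
      rfl

theorem pw_some_eq_none_iff {k d m : ℝ} (hkm : k ≤ m) (j : ℕ) :
    pw (some (k, d, m)) j = none ↔ m - k < j * |d| := by
  rw [pw_some_eq hkm]
  split_ifs with h <;> simpa using h

theorem stmt8_general (n : ℕ) (k d m : ℝ)
    (hx : inM n (some (k, d, m))) (hd : d ≠ 0)
    (i : ℕ) (hi : (i : ℤ) = 2 + ⌊(m - k) / |d|⌋) :
    pw (some (k, d, m)) (i - 1) = none ∧
    pw (some (k, d, m)) (i - 2) ≠ none ∧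
    (m = k → i = 2) := by
  have hkm : k ≤ m := hx.2.1
  have hd' : 0 < |d| := abs_pos.mpr hd
  have hr : 0 ≤ (m - k) / |d| := div_nonneg (sub_nonneg.2 hkm) hd'.le
  obtain rfl : i = ⌊(m - k) / |d|⌋₊ + 2 := by
    have := Int.natCast_floor_eq_floor hr
    omega
  refine ⟨?_, ?_, fun hmk ↦ by simp [hmk]⟩
  · rw [Nat.add_sub_assoc one_le_two, pw_some_eq_none_iff hkm]
    push_cast
    exact (div_lt_iff₀ hd').1 (Nat.lt_floor_add_one _)
  · rw [Nat.add_sub_cancel, Ne, pw_some_eq_none_iff hkm, not_lt]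
    exact (le_div_iff₀ hd').1 (Nat.floor_le hr)

/-- a nonzero x = (k,d,m) ∈ M̄_n with d ≠ 0 is nilpotent of index
exactly i = 2 + ⌊(m-k)/|d|⌋: the i-th power (= `pw x (i-1)`) is 0 while the
(i-1)-st power (= `pw x (i-2)`) is nonzero; and if m = k then i = 2. -/
theorem stmt8 (n : ℕ) (hn : 2 ≤ n) (k d m : ℝ)
    (hx : inM n (some (k, d, m))) (hd : d ≠ 0)
    (i : ℕ) (hi : (i : ℤ) = 2 + ⌊(m - k) / |d|⌋) :
    pw (some (k, d, m)) (i - 1) = none ∧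
    pw (some (k, d, m)) (i - 2) ≠ none ∧
    (m = k → i = 2) :=
  stmt8_general n k d m hx hd i hi
end
end

section
/- The monoid M̄_n is periodic but not categorical at zero: (a) every element x ∈ M̄_n satisfies either x·x = x or x^j = 0 for some natural number j ≥ 1; (b) there exist elements x, y, z ∈ M̄_n with x·y·z = 0 but x·y ≠ 0 and y·z ≠ 0. -/
noncomputable section

lemma pw_pos (k d m : ℝ) (hd : 0 < d) (hkm : k ≤ m) (j : ℕ) :
    pw (some (k, d, m)) j = none ∨
    (pw (some (k, d, m)) j = some (k, (j + 1) * d, m - j * d) ∧ k ≤ m - j * d) := by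
  induction j with
  | zero => right; refine ⟨by simp [pw], by simpa using hkm⟩
  | succ j ih =>
    rcases ih with h | ⟨h, hle⟩
    · left; simp [pw, h, mul]
    · by_cases hc : k ≤ m - (j + 1 : ℕ) * d
      · right
        have h1 : max k (k - (j + 1) * d) = k := by
          apply max_eq_left; nlinarith [Nat.cast_nonneg (α := ℝ) j]
        have h2 : min (m - j * d) (m - (j + 1) * d) = m - (j + 1) * d := by
          apply min_eq_right; nlinarith [Nat.cast_nonneg (α := ℝ) j]
        constructor
        · simp only [pw, h, mul]
          rw [if_pos]
          · push_cast; rw [h1, h2] <;> push_cast <;> ring_nf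
          · push_cast at hc ⊢; rw [h1, h2]; linarith
        · exact hc
      · left
        simp only [pw, h, mul]
        rw [if_neg]
        push_cast at hc ⊢
        intro hx
        have := le_trans (le_max_left k _) (le_trans hx (min_le_right _ _))
        linarith

lemma pw_neg (k d m : ℝ) (hd : d < 0) (hkm : k ≤ m) (j : ℕ) :
    pw (some (k, d, m)) j = none ∨
    (pw (some (k, d, m)) j = some (k - j * d, (j + 1) * d, m) ∧ k - j * d ≤ m) := by
  induction j with
  | zero => right; refine ⟨by simp [pw], by simpa using hkm⟩
  | succ j ih =>
    rcases ih with h | ⟨h, hle⟩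
    · left; simp [pw, h, mul]
    · by_cases hc : k - (j + 1 : ℕ) * d ≤ m
      · right
        have h1 : max (k - j * d) (k - (j + 1) * d) = k - (j + 1) * d := by
          apply max_eq_right; nlinarith [Nat.cast_nonneg (α := ℝ) j]
        have h2 : min m (m - (j + 1) * d) = m := by
          apply min_eq_left; nlinarith [Nat.cast_nonneg (α := ℝ) j]
        constructor
        · simp only [pw, h, mul]
          rw [if_pos]
          · push_cast; rw [h1, h2] <;> push_cast <;> ring_nf
          · push_cast at hc ⊢; rw [h1, h2]; linarith
        · exact hc
      · left
        simp only [pw, h, mul]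
        rw [if_neg]
        push_cast at hc ⊢
        intro hx
        have := le_trans (le_max_right (k - j*d) _) (le_trans hx (min_le_left _ _))
        linarith

/-- M̄_n is periodic (every element is idempotent or nilpotent)
but is not categorical at zero. -/
theorem stmt9 (n : ℕ) (hn : 2 ≤ n) :
    (∀ x : El, inM n x →
      mul x x = x ∨ ∃ j : ℕ, 1 ≤ j ∧ pw x (j - 1) = none) ∧
    (∃ x y z : El, inM n x ∧ inM n y ∧ inM n z ∧
      mul (mul x y) z = none ∧ mul x y ≠ none ∧ mul y z ≠ none) := by
  constructor
  · rintro (_ | ⟨k, d, m⟩) hx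
    · right; exact ⟨1, le_refl 1, rfl⟩
    · obtain ⟨h1, hkm, h3⟩ := hx
      rcases lt_trichotomy d 0 with hd | hd | hd
      · right
        obtain ⟨j, hj⟩ := exists_nat_gt ((m - k) / (-d))
        have hj' : m < k - j * d := by
          have := (div_lt_iff₀ (by linarith : (0:ℝ) < -d)).mp hj
          nlinarith
        refine ⟨j + 1, by omega, ?_⟩
        simp only [Nat.add_sub_cancel]
        rcases pw_neg k d m hd hkm j with h | ⟨_, hle⟩
        · exact h
        · linarith
      · left
        subst hd
        simp only [mul, sub_zero, max_self, min_self, add_zero]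
        rw [if_pos (by simp [hkm])]
      · right
        obtain ⟨j, hj⟩ := exists_nat_gt ((m - k) / d)
        have hj' : m - j * d < k := by
          have := (div_lt_iff₀ hd).mp hj
          nlinarith
        refine ⟨j + 1, by omega, ?_⟩
        simp only [Nat.add_sub_cancel]
        rcases pw_pos k d m hd hkm j with h | ⟨_, hle⟩
        · exact h
        · linarith
  · refine ⟨some (2, 0, 2), some (1, 0, 2), some (1, 1, 1), ?_, ?_, ?_, ?_, ?_, ?_⟩
    · refine ⟨by norm_num, by norm_num, ?_⟩
      have : (2:ℝ) ≤ n := by exact_mod_cast hn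
      simpa using this
    · refine ⟨by norm_num, by norm_num, ?_⟩
      have : (2:ℝ) ≤ n := by exact_mod_cast hn
      simpa using this
    · refine ⟨by norm_num, by norm_num, ?_⟩
      have : (2:ℝ) ≤ n := by exact_mod_cast hn
      simp; linarith
    · norm_num [mul]
    · simp [mul]
    · simp [mul]
end
end

section
/- Define φ : M̄_n → ℂ by φ(0) = 0 and φ((k,d,m)) = exp(i·d/(n−1)). Then: (a) φ(x) = 0 if and only if x = 0 (φ is 0-restricted); (b) if φ(x) = 1 then x·x = x (φ is idempotent-pure); (c) whenever x, y ∈ M̄_n satisfy x·y ≠ 0, one has φ(x·y) = φ(x)·φ(y) (φ is a 0-morphism into the circle group with zero adjoined, every nonzero value of φ having modulus 1). Hence M̄_n is a strongly E*-unitary inverse semigroup. -/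
/-!
`φ` only sees the middle coordinate `d`, which is additive under the product, so `φ` is
multiplicative wherever the product is nonzero and takes values on the unit circle. Membership
in `M̄_n` forces `|d| ≤ n - 1`, so the angle `d / (n - 1)` lies in `[-1, 1]`, where `exp (i·t) = 1`
only for `t = 0`; and a triple `(k, 0, m)` with `k ≤ m` is idempotent.
-/

noncomputable section

/-- The 0-morphism into the circle group with zero: 0 ↦ 0 and
(k,d,m) ↦ exp(i·d/(n-1)). -/
def phi10 (n : ℕ) : El → ℂ
  | none => 0
  | some (_, d, _) => Complex.exp (Complex.I * (d : ℂ) / ((n : ℝ) - 1))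

open Complex

lemma eq_zero_of_cexp_ofReal_mul_I_eq_one {t : ℝ} (h₁ : -(2 * Real.pi) < t)
    (h₂ : t < 2 * Real.pi) (h : cexp (t * I) = 1) : t = 0 := by
  have hcos : Real.cos t = 1 := by
    rw [← exp_ofReal_mul_I_re, h, one_re]
  exact (Real.cos_eq_one_iff_of_lt_of_lt h₁ h₂).mp hcos

lemma abs_le_of_inM {n : ℕ} {k d m : ℝ} (h : inM n (some (k, d, m))) : |d| ≤ n - 1 := by
  obtain ⟨hk, hkm, hm⟩ := h
  have hwidth : max 0 d - min 0 d = |d| := by rw [max_sub_min_eq_abs, sub_zero]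
  linarith

lemma phi10_some (n : ℕ) (k d m : ℝ) :
    phi10 n (some (k, d, m)) = cexp ((d / ((n : ℝ) - 1) : ℝ) * I) := by
  simp only [phi10, ofReal_div, ofReal_sub, ofReal_natCast, ofReal_one]
  ring_nf

lemma phi10_eq_zero_iff (n : ℕ) (x : El) : phi10 n x = 0 ↔ x = none := by
  rcases x with _ | ⟨k, d, m⟩
  · simp [phi10]
  · simp [phi10, exp_ne_zero]

lemma norm_phi10 (n : ℕ) {x : El} (hx : x ≠ none) : ‖phi10 n x‖ = 1 := by
  obtain ⟨⟨k, d, m⟩, rfl⟩ := Option.ne_none_iff_exists'.mp hx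
  rw [phi10_some, norm_exp_ofReal_mul_I]

lemma phi10_mul (n : ℕ) {x y : El} (hxy : mul x y ≠ none) :
    phi10 n (mul x y) = phi10 n x * phi10 n y := by
  rcases x with _ | ⟨k, d, m⟩ <;> rcases y with _ | ⟨k', d', m'⟩ <;> try exact absurd rfl hxy
  simp only [mul] at hxy ⊢
  split_ifs at hxy ⊢
  · simp only [phi10, ← exp_add, ofReal_add]
    ring_nf
  · exact absurd rfl hxy

lemma mul_self_some_zero {k m : ℝ} (hkm : k ≤ m) :
    mul (some (k, 0, m)) (some (k, 0, m)) = some (k, 0, m) := by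
  simp [mul, hkm]

lemma mul_self_of_phi10_eq_one {n : ℕ} (hn : 2 ≤ n) {x : El} (hx : inM n x)
    (h : phi10 n x = 1) : mul x x = x := by
  rcases x with _ | ⟨k, d, m⟩
  · rfl
  have hpos : (0 : ℝ) < n - 1 := by
    have : (2 : ℝ) ≤ n := by exact_mod_cast hn
    linarith
  have hangle : |d / ((n : ℝ) - 1)| ≤ 1 := by
    rw [abs_div, abs_of_pos hpos, div_le_one hpos]
    exact abs_le_of_inM hx
  have hd : d = 0 := by
    rw [phi10_some] at h
    obtain ⟨h₁, h₂⟩ := abs_le.mp hangle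
    have hpi := Real.pi_gt_three
    have := eq_zero_of_cexp_ofReal_mul_I_eq_one (by linarith) (by linarith) h
    simpa [hpos.ne'] using this
  subst hd
  exact mul_self_some_zero hx.2.1

/-- φ is 0-restricted, idempotent-pure, multiplicative on nonzero
products, and its nonzero values lie on the unit circle; hence M̄_n is a
strongly E*-unitary inverse semigroup. -/
theorem stmt10 (n : ℕ) (hn : 2 ≤ n) :
    (∀ x : El, inM n x → (phi10 n x = 0 ↔ x = none)) ∧
    (∀ x : El, inM n x → phi10 n x = 1 → mul x x = x) ∧
    (∀ x y : El, inM n x → inM n y → mul x y ≠ none →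
      phi10 n (mul x y) = phi10 n x * phi10 n y) ∧
    (∀ x : El, inM n x → x ≠ none → ‖phi10 n x‖ = 1) :=
  ⟨fun x _ => phi10_eq_zero_iff n x,
    fun _ hx => mul_self_of_phi10_eq_one hn hx,
    fun _ _ _ _ => phi10_mul n,
    fun _ _ => norm_phi10 n⟩
end
end

section
/- Green's relations D and J on M̄_n coincide and are determined by the height: for nonzero elements x, y ∈ M̄_n, (a) there exists z ∈ M̄_n with z^T·z = x^T·x and z·z^T = y·y^T if and only if h(x) = h(y); and (b) the principal two-sided ideals coincide, {u·x·v : u,v ∈ M̄_n} = {u·y·v : u,v ∈ M̄_n}, if and only if h(x) = h(y). Moreover, 0 forms a D-class and a J-class on its own. -/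
noncomputable section

/-- The principal two-sided ideal M̄_n·x·M̄_n. -/
def Jset (n : ℕ) (x : El) : Set El :=
  {w | ∃ u v : El, inM n u ∧ inM n v ∧ w = mul (mul u x) v}

lemma bounds {n : ℕ} {k d m : ℝ} (h : inM n (some (k,d,m))) :
    1 ≤ k ∧ 1 ≤ k + d ∧ m ≤ n ∧ m + d ≤ n ∧ k ≤ m := by
  obtain ⟨h1, h2, h3⟩ := h
  have a := min_le_left (0:ℝ) d
  have b := min_le_right (0:ℝ) d
  have c := le_max_left (0:ℝ) d
  have e := le_max_right (0:ℝ) d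
  exact ⟨by linarith, by linarith, by linarith, by linarith, h2⟩
lemma mem_mk {n : ℕ} {k d m : ℝ} (h1 : 1 ≤ k) (h2 : 1 ≤ k + d) (h3 : k ≤ m)
    (h4 : m ≤ n) (h5 : m + d ≤ n) : inM n (some (k,d,m)) := by
  refine ⟨?_, h3, ?_⟩
  · rcases min_cases (0:ℝ) d with ⟨e,_⟩|⟨e,_⟩ <;> rw [e] <;> linarith
  · rcases max_cases (0:ℝ) d with ⟨e,_⟩|⟨e,_⟩ <;> rw [e] <;> linarith


lemma txx {k d m : ℝ} (h : k ≤ m) :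
    mul (transp (some (k,d,m))) (some (k,d,m)) = some (k+d, 0, m+d) := by
  have e1 : k - -d = k + d := by ring
  have e2 : m - -d = m + d := by ring
  simp only [transp, mul, e1, e2, max_self, min_self, if_pos (by linarith : k+d ≤ m+d)]
  norm_num

lemma xtx {k d m : ℝ} (h : k ≤ m) :
    mul (some (k,d,m)) (transp (some (k,d,m))) = some (k, 0, m) := by
  have e1 : k + d - d = k := by ring
  have e2 : m + d - d = m := by ring
  simp only [transp, mul, e1, e2, max_self, min_self, if_pos h]
  norm_num

lemma inM_mul {n : ℕ} {u v : El} (hu : inM n u) (hv : inM n v) : inM n (mul u v) := by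
  rcases u with _|⟨k,d,m⟩
  · rw [mul_none_left]; trivial
  rcases v with _|⟨k',d',m'⟩
  · rw [mul_none_right]; trivial
  obtain ⟨a1,a2,a3,a4,a5⟩ := bounds hu
  obtain ⟨b1,b2,b3,b4,b5⟩ := bounds hv
  simp only [mul]
  split
  · rename_i hc
    have l1 := le_max_left k (k' - d)
    have l2 := le_max_right k (k' - d)
    have l3 := min_le_left m (m' - d)
    have l4 := min_le_right m (m' - d)
    exact mem_mk (by linarith) (by linarith) hc (by linarith) (by linarith)
  · trivial

lemma inM_e {n : ℕ} (hn : 2 ≤ n) : inM n (some ((1:ℝ), (0:ℝ), (n:ℝ))) := by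
  have : (2:ℝ) ≤ n := by exact_mod_cast hn
  exact mem_mk le_rfl (by norm_num) (by linarith) le_rfl (by norm_num)

lemma mul_e_left {n : ℕ} {x : El} (hx : inM n x) : mul (some ((1:ℝ),(0:ℝ),(n:ℝ))) x = x := by
  rcases x with _|⟨k,d,m⟩
  · rfl
  obtain ⟨b1,b2,b3,b4,b5⟩ := bounds hx
  have e1 : max (1:ℝ) (k - 0) = k := by rw [sub_zero]; exact max_eq_right b1
  have e2 : min (n:ℝ) (m - 0) = m := by rw [sub_zero]; exact min_eq_right b3
  simp only [mul, e1, e2, if_pos b5, zero_add]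

lemma mul_e_right {n : ℕ} {x : El} (hx : inM n x) : mul x (some ((1:ℝ),(0:ℝ),(n:ℝ))) = x := by
  rcases x with _|⟨k,d,m⟩
  · rfl
  obtain ⟨b1,b2,b3,b4,b5⟩ := bounds hx
  have e1 : max k (1 - d) = k := max_eq_left (by linarith)
  have e2 : min m ((n:ℝ) - d) = m := min_eq_left (by linarith)
  simp only [mul, e1, e2, if_pos b5, add_zero]

lemma height_mul_ne {u v : El} (h : mul u v ≠ none) :
    height (mul u v) ≤ height u ∧ height (mul u v) ≤ height v := by
  rcases u with _|⟨k,d,m⟩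
  · exact absurd (mul_none_left v) h
  rcases v with _|⟨k',d',m'⟩
  · exact absurd (mul_none_right _) h
  simp only [mul] at h ⊢
  split at h
  · rename_i hc
    rw [if_pos hc]
    have l1 := le_max_left k (k' - d)
    have l2 := le_max_right k (k' - d)
    have l3 := min_le_left m (m' - d)
    have l4 := min_le_right m (m' - d)
    constructor <;> · show _ - _ ≤ _ - _; linarith
  · exact absurd rfl h

lemma self_mem_Jset {n : ℕ} (hn : 2 ≤ n) {x : El} (hx : inM n x) : x ∈ Jset n x :=
  ⟨some (1,0,(n:ℝ)), some (1,0,(n:ℝ)), inM_e hn, inM_e hn,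
    by rw [mul_e_left hx, mul_e_right hx]⟩

lemma Jset_none {n : ℕ} : Jset n none = {none} := by
  ext w
  constructor
  · rintro ⟨u, v, _, _, rfl⟩
    rw [mul_none_right, mul_none_left]; rfl
  · rintro rfl
    exact ⟨none, none, trivial, trivial, by rw [mul_none_left, mul_none_left]⟩

lemma mem_Jset_iff {n : ℕ} {k d m : ℝ}
    (hx : inM n (some (k,d,m))) (w : El) :
    w ∈ Jset n (some (k,d,m)) ↔ (w = none ∨ (inM n w ∧ height w ≤ height (some (k,d,m)))) := by
  constructor
  · rintro ⟨u, v, hu, hv, rfl⟩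
    by_cases h0 : mul (mul u (some (k,d,m))) v = none
    · exact Or.inl h0
    · refine Or.inr ⟨inM_mul (inM_mul hu hx) hv, ?_⟩
      have h1 : mul u (some (k,d,m)) ≠ none := by
        intro h; rw [h, mul_none_left] at h0; exact h0 rfl
      exact le_trans (height_mul_ne h0).1 (height_mul_ne h1).2
  · rintro (rfl | ⟨hw, hh⟩)
    · exact ⟨none, none, trivial, trivial, by rw [mul_none_left, mul_none_left]⟩
    rcases w with _|⟨a,b,c⟩
    · exact ⟨none, none, trivial, trivial, by rw [mul_none_left, mul_none_left]⟩
    obtain ⟨x1,x2,x3,x4,x5⟩ := bounds hx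
    obtain ⟨w1,w2,w3,w4,w5⟩ := bounds hw
    have hh' : c - a ≤ m - k := hh
    refine ⟨some (a, k - a, c), some (k + d, a + b - k - d, c + k - a + d),
      mem_mk (by linarith) (by linarith) (by linarith) (by linarith) (by linarith),
      mem_mk (by linarith) (by linarith) (by linarith) (by linarith) (by linarith), ?_⟩
    have st1 : mul (some (a, k - a, c)) (some (k,d,m)) = some (a, k - a + d, c) := by
      have e1 : k - (k - a) = a := by ring
      have e2 : min c (m - (k - a)) = c := min_eq_left (by linarith)
      simp only [mul, e1, max_self, e2, if_pos w5]
    rw [st1]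
    have e3 : k + d - (k - a + d) = a := by ring
    have e4 : c + k - a + d - (k - a + d) = c := by ring
    have e5 : k - a + d + (a + b - k - d) = b := by ring
    simp only [mul, e3, e4, max_self, min_self, if_pos w5, e5]

/-- Green's relations D and J on M̄_n coincide and are determined
by the height: for nonzero x, y, (a) xDy (∃ z with zᵀ·z = xᵀ·x and z·zᵀ = y·yᵀ)
iff h(x) = h(y); (b) xJy iff h(x) = h(y).  Moreover 0 forms a D-class and a
J-class on its own. -/
theorem stmt12 (n : ℕ) (hn : 2 ≤ n) :
    (∀ x y : El, inM n x → inM n y → x ≠ none → y ≠ none →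
      ((∃ z : El, inM n z ∧
          mul (transp z) z = mul (transp x) x ∧
          mul z (transp z) = mul y (transp y)) ↔ height x = height y) ∧
      (Jset n x = Jset n y ↔ height x = height y)) ∧
    (∀ x : El, inM n x →
      ((∃ z : El, inM n z ∧
          mul (transp z) z = mul (transp x) x ∧
          mul z (transp z) = mul (none : El) (transp (none : El))) ↔ x = none) ∧
      (Jset n x = Jset n none ↔ x = none)) := by
  constructor
  · rintro x y hx hy hx0 hy0
    rcases x with _|⟨k,d,m⟩; · exact absurd rfl hx0
    rcases y with _|⟨k',d',m'⟩; · exact absurd rfl hy0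
    obtain ⟨x1,x2,x3,x4,x5⟩ := bounds hx
    obtain ⟨y1,y2,y3,y4,y5⟩ := bounds hy
    constructor
    · -- D relation
      constructor
      · rintro ⟨z, hz, h1, h2⟩
        rcases z with _|⟨a,b,c⟩
        · rw [show transp none = none from rfl, mul_none_left, txx x5] at h1
          exact absurd h1 (by simp)
        obtain ⟨z1,z2,z3,z4,z5⟩ := bounds hz
        rw [txx z5, txx x5] at h1
        rw [xtx z5, xtx y5] at h2
        simp only [Option.some.injEq, Prod.mk.injEq] at h1 h2
        obtain ⟨e1, _, e2⟩ := h1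
        obtain ⟨e3, _, e4⟩ := h2
        show m - k = m' - k'
        linarith
      · rintro hh
        have hh' : m - k = m' - k' := hh
        refine ⟨some (k', k + d - k', m'), mem_mk (by linarith) (by linarith)
          (by linarith) (by linarith) (by linarith), ?_, ?_⟩
        · rw [txx y5, txx x5]
          simp only [Option.some.injEq, Prod.mk.injEq]
          exact ⟨by ring, trivial, by linarith⟩
        · rw [xtx y5, xtx y5]
    · -- J relation
      constructor
      · intro hJ
        have h1 : (some (k',d',m') : El) ∈ Jset n (some (k,d,m)) := by
          rw [hJ]; exact self_mem_Jset hn hy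
        have h2 : (some (k,d,m) : El) ∈ Jset n (some (k',d',m')) := by
          rw [← hJ]; exact self_mem_Jset hn hx
        rw [mem_Jset_iff hx] at h1
        rw [mem_Jset_iff hy] at h2
        rcases h1 with h1|⟨_,h1⟩; · exact absurd h1 (by simp)
        rcases h2 with h2|⟨_,h2⟩; · exact absurd h2 (by simp)
        have e1 : m' - k' ≤ m - k := h1
        have e2 : m - k ≤ m' - k' := h2
        show m - k = m' - k'
        linarith
      · intro hh
        have hh' : m - k = m' - k' := hh
        ext w
        rw [mem_Jset_iff hx, mem_Jset_iff hy]
        have : height (some (k,d,m)) = height (some (k',d',m')) := hh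
        rw [this]
  · intro x hx
    constructor
    · constructor
      · rintro ⟨z, hz, h1, h2⟩
        rcases z with _|⟨a,b,c⟩
        · rcases x with _|⟨k,d,m⟩
          · rfl
          · obtain ⟨x1,x2,x3,x4,x5⟩ := bounds hx
            rw [show transp none = none from rfl, mul_none_left, txx x5] at h1
            exact absurd h1.symm (by simp)
        · obtain ⟨z1,z2,z3,z4,z5⟩ := bounds hz
          rw [xtx z5] at h2
          exact absurd h2 (by simp [transp, mul])
      · rintro rfl
        exact ⟨none, trivial, rfl, rfl⟩
    · constructor
      · intro hJ
        have h1 : x ∈ Jset n none := by rw [← hJ]; exact self_mem_Jset hn hx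
        rw [Jset_none] at h1
        exact h1
      · rintro rfl; rfl
end
end

section
/- The inverse monoid M̄_n is combinatorial and completely semisimple: (a) for all x, y ∈ M̄_n, if x·x^T = y·y^T and x^T·x = y^T·y then x = y (the H-relation is equality); (b) for all x, y ∈ M̄_n, if h(x) = h(y) and x = (x·x^T)·y (i.e., x ≤ y in the natural partial order) then x = y. -/
noncomputable section

lemma idem (k d m : ℝ) (h : k ≤ m) :
    mul (some (k,d,m)) (transp (some (k,d,m))) = some (k, 0, m) := by
  simp [mul, transp, h]

lemma idem' (k d m : ℝ) (h : k ≤ m) :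
    mul (transp (some (k,d,m))) (some (k,d,m)) = some (k+d, 0, m+d) := by
  simp [mul, transp, h]

/-- M̄_n is combinatorial (the H-relation is equality) and
completely semisimple (D-related comparable elements are equal). -/
theorem stmt13 (n : ℕ) (hn : 2 ≤ n) :
    (∀ x y : El, inM n x → inM n y →
      mul x (transp x) = mul y (transp y) →
      mul (transp x) x = mul (transp y) y → x = y) ∧
    (∀ x y : El, inM n x → inM n y →
      height x = height y → x = mul (mul x (transp x)) y → x = y) := by
  constructor
  · rintro (_|⟨k,d,m⟩) (_|⟨k',d',m'⟩) hx hy h1 h2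
    · rfl
    · rw [idem k' d' m' hy.2.1] at h1
      simp [mul, transp] at h1
    · rw [idem k d m hx.2.1] at h1
      simp [mul, transp] at h1
    · rw [idem k d m hx.2.1, idem k' d' m' hy.2.1] at h1
      rw [idem' k d m hx.2.1, idem' k' d' m' hy.2.1] at h2
      simp only [Option.some.injEq, Prod.mk.injEq] at h1 h2
      obtain ⟨hk, -, hm⟩ := h1
      obtain ⟨hkd, -, -⟩ := h2
      have : d = d' := by linarith [hkd]
      simp [hk, hm, this]
  · rintro (_|⟨k,d,m⟩) (_|⟨k',d',m'⟩) hx hy hh he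
    · rfl
    · simp [height] at hh
      obtain ⟨-, h2, -⟩ := hy
      linarith
    · rw [idem k d m hx.2.1] at he
      simp [mul] at he
    · rw [idem k d m hx.2.1] at he
      simp only [mul] at he
      split_ifs at he with hc
      simp only [Option.some.injEq, Prod.mk.injEq] at he
      obtain ⟨hk, hd, hm⟩ := he
      simp [height] at hh
      have hk' : k' ≤ k := by
        by_contra h; push_neg at h
        rw [max_eq_right (by linarith)] at hk; linarith
      have hm' : m ≤ m' := by
        by_contra h; push_neg at h
        rw [min_eq_right (by linarith)] at hm; linarith
      have hkk : k = k' := by linarith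
      have hmm : m = m' := by linarith
      rw [hkk, hmm, hd]
      norm_num
end
end

section
/- Let P̄_n denote the set of nonzero elements (k,d,m) of M̄_n with m = k. If y ∈ {0} ∪ P̄_n and x ∈ M̄_n is nonzero, then there exist z, w ∈ {0} ∪ P̄_n such that y = z·x·w. -/
noncomputable section

/-- Membership in {0} ∪ P̄_n: zero, or a point (k,d,k). -/
def isPoint : El → Prop
  | none => True
  | some (k, _, m) => m = k

/-- if y ∈ {0} ∪ P̄_n and x ∈ M̄_n is nonzero, then y = z·x·w for
some z, w ∈ {0} ∪ P̄_n. -/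
theorem stmt15 (n : ℕ) (hn : 2 ≤ n) (y x : El)
    (hy : inM n y) (hyP : isPoint y) (hx : inM n x) (hx0 : x ≠ none) :
    ∃ z w : El, inM n z ∧ inM n w ∧ isPoint z ∧ isPoint w ∧
      y = mul (mul z x) w := by
  cases y with
  | none =>
      exact ⟨none, none, trivial, trivial, trivial, trivial, by cases x <;> rfl⟩
  | some p =>
      obtain ⟨k, d, m⟩ := p
      cases x with
      | none => exact absurd rfl hx0
      | some q =>
        obtain ⟨k', d', m'⟩ := q
        have hm : m = k := hyP
        subst hm
        obtain ⟨h1, h2, h3⟩ := hy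
        obtain ⟨h1', h2', h3'⟩ := hx
        have hmin : min (0:ℝ) d ≤ 0 := min_le_left 0 d
        have hmax : (0:ℝ) ≤ max 0 d := le_max_left 0 d
        have hmin' : min (0:ℝ) d' ≤ 0 := min_le_left 0 d'
        have hmax' : (0:ℝ) ≤ max 0 d' := le_max_left 0 d'
        have hmind : min (0:ℝ) d ≤ d := min_le_right 0 d
        have hmaxd : d ≤ max 0 d := le_max_right 0 d
        have hmind' : min (0:ℝ) d' ≤ d' := min_le_right 0 d'
        have hmaxd' : d' ≤ max 0 d' := le_max_right 0 d'
        have hk1 : 1 ≤ m := by linarith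
        have hkn : m ≤ n := by linarith
        have hk1' : 1 ≤ k' := by linarith
        have hkn' : m' ≤ n := by linarith
        refine ⟨some (m, k' - m, m), some (k' + d', d + m - k' - d', k' + d'),
          ?_, ?_, rfl, rfl, ?_⟩
        · refine ⟨?_, le_refl m, ?_⟩
          · rcases le_total (k' - m) 0 with h | h
            · rw [min_eq_right h]; linarith
            · rw [min_eq_left h]; linarith
          · rcases le_total (k' - m) 0 with h | h
            · rw [max_eq_left h]; linarith
            · rw [max_eq_right h]; linarith
        · have hkd1 : 1 ≤ k' + d' := by
            rcases le_total d' 0 with h | h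
            · rw [min_eq_right h] at h1'; linarith
            · linarith
          have hkdn : k' + d' ≤ n := by
            rcases le_total d' 0 with h | h
            · linarith
            · rw [max_eq_right h] at h3'; linarith
          have hkd1y : 1 ≤ m + d := by
            rcases le_total d 0 with h | h
            · rw [min_eq_right h] at h1; linarith
            · linarith
          have hkdny : m + d ≤ n := by
            rcases le_total d 0 with h | h
            · linarith
            · rw [max_eq_right h] at h3; linarith
          refine ⟨?_, le_refl _, ?_⟩
          · rcases le_total (d + m - k' - d') 0 with h | h
            · rw [min_eq_right h]; linarith
            · rw [min_eq_left h]; linarith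
          · rcases le_total (d + m - k' - d') 0 with h | h
            · rw [max_eq_left h]; linarith
            · rw [max_eq_right h]; linarith
        · have e1 : mul (some (m, k' - m, m)) (some (k', d', m'))
              = some (m, k' - m + d', m) := by
            have hmx : max m (k' - (k' - m)) = m := by
              rw [show k' - (k' - m) = m by ring, max_self]
            have hmn : min m (m' - (k' - m)) = m := by
              rw [min_eq_left (by linarith)]
            simp only [mul, hmx, hmn, if_pos (le_refl m)]
          have e2 : mul (some (m, k' - m + d', m))
              (some (k' + d', d + m - k' - d', k' + d'))
              = some (m, d, m) := by
            have hmx : max m (k' + d' - (k' - m + d')) = m := by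
              rw [show k' + d' - (k' - m + d') = m by ring, max_self]
            have hmn : min m (k' + d' - (k' - m + d')) = m := by
              rw [show k' + d' - (k' - m + d') = m by ring, min_self]
            simp only [mul, hmx, hmn, if_pos (le_refl m)]
            congr 1
            ext <;> simp <;> ring
          rw [e1, e2]
end
end

section
/- Call a nonempty subset I ⊆ M̄_n an ideal if z·x ∈ I and x·z ∈ I for all x ∈ I and z ∈ M̄_n. For μ ∈ {−1} ∪ [0, n−1] set I_μ = {y ∈ M̄_n : h(y) ≤ μ}, and for μ ∈ (0, n−1] set K_μ = {y ∈ M̄_n : h(y) < μ}. Then: (a) the principal ideals of M̄_n are exactly the sets I_μ; more precisely, for any x ∈ M̄_n with h(x) = μ one has {u·x·v : u,v ∈ M̄_n} = I_μ; (b) each K_μ is an ideal, and K_μ is not equal to {u·x·v : u,v ∈ M̄_n} for any x ∈ M̄_n (K_μ is not principal); (c) every ideal of M̄_n equals I_μ for some μ ∈ {−1} ∪ [0, n−1] or K_μ for some μ ∈ (0, n−1]. -/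
noncomputable section

/-- An ideal of M̄_n: a nonempty subset of M̄_n closed under multiplication by
arbitrary elements of M̄_n on either side. -/
def IsIdeal (n : ℕ) (I : Set El) : Prop :=
  I.Nonempty ∧ I ⊆ {x : El | inM n x} ∧
    ∀ x ∈ I, ∀ z : El, inM n z → mul z x ∈ I ∧ mul x z ∈ I

/-- The sets I_μ = {y ∈ M̄_n : h(y) ≤ μ}. -/
def Iset (n : ℕ) (μ : ℝ) : Set El := {y : El | inM n y ∧ height y ≤ μ}

/-- The sets K_μ = {y ∈ M̄_n : h(y) < μ}. -/
def Kset (n : ℕ) (μ : ℝ) : Set El := {y : El | inM n y ∧ height y < μ}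

lemma height_cases {n : ℕ} {x : El} (hx : inM n x) :
    height x = -1 ∨ (0 ≤ height x ∧ height x ≤ (n : ℝ) - 1) := by
  match x with
  | none => exact Or.inl rfl
  | some (k, d, m) =>
    obtain ⟨h1, h2, h3⟩ := hx
    right
    have hmin : min (0:ℝ) d ≤ 0 := min_le_left _ _
    have hmax : (0:ℝ) ≤ max 0 d := le_max_left _ _
    constructor <;> simp only [height] <;> linarith

lemma height_ge {n : ℕ} {x : El} (hx : inM n x) : -1 ≤ height x := by
  rcases height_cases hx with h | ⟨h, _⟩ <;> linarith

lemma mul_mem {n : ℕ} {x y : El} (hx : inM n x) (hy : inM n y) : inM n (mul x y) := by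
  match x, y with
  | none, y => rw [mul_none_left]; trivial
  | some p, none => rw [mul_none_right]; trivial
  | some (k, d, m), some (k', d', m') =>
    obtain ⟨h1, h2, h3⟩ := hx
    obtain ⟨h4, h5, h6⟩ := hy
    simp only [mul]
    split_ifs with hc
    · refine ⟨?_, hc, ?_⟩
      · rw [le_max_iff]
        rcases le_total 0 (d + d') with hs | hs
        · left
          have h0 : min (0:ℝ) d ≤ 0 := min_le_left _ _
          rw [min_eq_left hs]; linarith
        · rcases le_total 0 d' with hd' | hd'
          · left
            have : min (0:ℝ) d = d := min_eq_right (by linarith)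
            rw [min_eq_right hs]; linarith
          · right
            have : min (0:ℝ) d' = d' := min_eq_right hd'
            rw [min_eq_right hs]; linarith
      · rw [min_le_iff]
        rcases le_total 0 (d + d') with hs | hs
        · rcases le_total 0 d' with hd' | hd'
          · right
            have : max (0:ℝ) d' = d' := max_eq_right hd'
            rw [max_eq_right hs]; linarith
          · left
            have : max (0:ℝ) d = d := max_eq_right (by linarith)
            rw [max_eq_right hs]; linarith
        · left
          have h0 : (0:ℝ) ≤ max 0 d := le_max_left _ _
          rw [max_eq_left (by linarith)]; linarith
    · trivial

lemma height_mul_le {n : ℕ} {x y : El} (hx : inM n x) (hy : inM n y) :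
    height (mul x y) ≤ height x ∧ height (mul x y) ≤ height y := by
  match x, y with
  | none, y => rw [mul_none_left]; exact ⟨le_refl _, height_ge hy⟩
  | some p, none =>
    rw [mul_none_right]; exact ⟨height_ge hx, le_refl _⟩
  | some (k, d, m), some (k', d', m') =>
    obtain ⟨h1, h2, h3⟩ := hx
    obtain ⟨h4, h5, h6⟩ := hy
    simp only [mul]
    split_ifs with hc
    · have a1 : min m (m' - d) ≤ m := min_le_left _ _
      have a2 : min m (m' - d) ≤ m' - d := min_le_right _ _
      have a3 : k ≤ max k (k' - d) := le_max_left _ _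
      have a4 : k' - d ≤ max k (k' - d) := le_max_right _ _
      constructor <;> simp only [height] <;> linarith
    · constructor <;> simp only [height] <;> linarith

/-- The construction: every element of height ≤ height x is in the principal ideal of x. -/
lemma exists_uv {n : ℕ} {x y : El} (hx : inM n x) (hy : inM n y)
    (h : height y ≤ height x) :
    ∃ u v : El, inM n u ∧ inM n v ∧ mul (mul u x) v = y := by
  match y with
  | none =>
    exact ⟨none, none, trivial, trivial, by rw [mul_none_left, mul_none_left]⟩
  | some (k₁, d₁, m₁) =>
    obtain ⟨h4, h5, h6⟩ := hy
    match x with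
    | none =>
      exfalso
      have : height (some (k₁, d₁, m₁)) = m₁ - k₁ := rfl
      have hx' : height (none : El) = -1 := rfl
      rw [this, hx'] at h
      have hmin : min (0:ℝ) d₁ ≤ 0 := min_le_left _ _
      linarith
    | some (k, d, m) =>
      obtain ⟨h1, h2, h3⟩ := hx
      have hh : m₁ - k₁ ≤ m - k := h
      have hmind : min (0:ℝ) d ≤ 0 := min_le_left _ _
      have hmind' : min (0:ℝ) d ≤ d := min_le_right _ _
      have hmaxd : (0:ℝ) ≤ max 0 d := le_max_left _ _
      have hmaxd' : d ≤ max 0 d := le_max_right _ _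
      have hmind1 : min (0:ℝ) d₁ ≤ 0 := min_le_left _ _
      have hmind1' : min (0:ℝ) d₁ ≤ d₁ := min_le_right _ _
      have hmaxd1 : (0:ℝ) ≤ max 0 d₁ := le_max_left _ _
      have hmaxd1' : d₁ ≤ max 0 d₁ := le_max_right _ _
      refine ⟨some (k₁, k - k₁, m₁), some (k + d, d₁ + k₁ - d - k, k + d + (m₁ - k₁)),
        ?_, ?_, ?_⟩
      · refine ⟨?_, by linarith, ?_⟩
        · rcases le_total k₁ k with hk | hk
          · rw [min_eq_left (by linarith)]; linarith
          · rw [min_eq_right (by linarith)]; linarith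
        · rcases le_total k₁ k with hk | hk
          · rw [max_eq_right (by linarith)]; linarith
          · rw [max_eq_left (by linarith)]; linarith
      · refine ⟨?_, by linarith, ?_⟩
        · rcases le_total 0 (d₁ + k₁ - d - k) with he | he
          · rw [min_eq_left he]; linarith
          · rw [min_eq_right he]; linarith
        · rcases le_total 0 (d₁ + k₁ - d - k) with he | he
          · rw [max_eq_right he]; linarith
          · rw [max_eq_left he]; linarith
      · have e1 : max k₁ (k - (k - k₁)) = k₁ := by rw [show k - (k - k₁) = k₁ by ring, max_self]
        have e2 : min m₁ (m - (k - k₁)) = m₁ := min_eq_left (by linarith)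
        simp only [mul]
        rw [if_pos (by rw [e1, e2]; linarith), e1, e2]
        have e3 : max k₁ (k + d - (k - k₁ + d)) = k₁ := by
          rw [show k + d - (k - k₁ + d) = k₁ by ring, max_self]
        have e4 : min m₁ (k + d + (m₁ - k₁) - (k - k₁ + d)) = m₁ := by
          rw [show k + d + (m₁ - k₁) - (k - k₁ + d) = m₁ by ring, min_self]
        simp only [mul]
        rw [if_pos (by rw [e3, e4]; linarith), e3, e4]
        norm_num
        ring

lemma Jset_eq {n : ℕ} {x : El} (hx : inM n x) : Jset n x = Iset n (height x) := by
  ext w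
  constructor
  · rintro ⟨u, v, hu, hv, rfl⟩
    have hux : inM n (mul u x) := mul_mem hu hx
    refine ⟨mul_mem hux hv, ?_⟩
    exact le_trans (height_mul_le hux hv).1 (height_mul_le hu hx).2
  · rintro ⟨hw, hle⟩
    obtain ⟨u, v, hu, hv, he⟩ := exists_uv hx hw hle
    exact ⟨u, v, hu, hv, he.symm⟩

lemma ideal_down {n : ℕ} {I : Set El} (hI : IsIdeal n I) {y w : El}
    (hy : y ∈ I) (hw : inM n w) (h : height w ≤ height y) : w ∈ I := by
  obtain ⟨-, hsub, hcl⟩ := hI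
  obtain ⟨u, v, hu, hv, he⟩ := exists_uv (hsub hy) hw h
  have h1 : mul u y ∈ I := ((hcl y hy u hu).1)
  have h2 : mul (mul u y) v ∈ I := ((hcl _ h1 v hv).2)
  rwa [he] at h2

lemma exists_height {n : ℕ} (hn : 2 ≤ n) {t : ℝ} (h0 : 0 ≤ t) (h1 : t ≤ (n : ℝ) - 1) :
    ∃ y : El, inM n y ∧ height y = t := by
  refine ⟨some (1, 0, 1 + t), ⟨?_, by linarith, ?_⟩, by simp [height]⟩
  · simp
  · simp; linarith

/-- (a) the principal ideals of M̄_n are exactly the sets I_μ,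
μ ∈ {-1} ∪ [0, n-1]; (b) each K_μ, μ ∈ (0, n-1], is a non-principal ideal;
(c) every ideal is some I_μ or some K_μ. -/
theorem stmt16 (n : ℕ) (hn : 2 ≤ n) :
    (∀ x : El, inM n x → Jset n x = Iset n (height x)) ∧
    (∀ μ : ℝ, (μ = -1 ∨ (0 ≤ μ ∧ μ ≤ (n : ℝ) - 1)) →
      ∃ x : El, inM n x ∧ height x = μ ∧ Jset n x = Iset n μ) ∧
    (∀ μ : ℝ, 0 < μ → μ ≤ (n : ℝ) - 1 →
      IsIdeal n (Kset n μ) ∧ ∀ x : El, inM n x → Jset n x ≠ Kset n μ) ∧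
    (∀ I : Set El, IsIdeal n I →
      (∃ μ : ℝ, (μ = -1 ∨ (0 ≤ μ ∧ μ ≤ (n : ℝ) - 1)) ∧ I = Iset n μ) ∨
      (∃ μ : ℝ, 0 < μ ∧ μ ≤ (n : ℝ) - 1 ∧ I = Kset n μ)) := by
  refine ⟨fun x hx => Jset_eq hx, ?_, ?_, ?_⟩
  · -- part (b): realizing each μ
    rintro μ (rfl | ⟨h0, h1⟩)
    · exact ⟨none, trivial, rfl, Jset_eq trivial⟩
    · obtain ⟨y, hy, hty⟩ := exists_height hn h0 h1
      exact ⟨y, hy, hty, hty ▸ Jset_eq hy⟩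
  · -- part (c): K_μ is a non-principal ideal
    intro μ hμ0 hμ1
    constructor
    · refine ⟨⟨none, trivial, by simp [height]; linarith⟩, fun y hy => hy.1, ?_⟩
      rintro x ⟨hx, hhx⟩ z hz
      constructor
      · exact ⟨mul_mem hz hx, lt_of_le_of_lt (height_mul_le hz hx).2 hhx⟩
      · exact ⟨mul_mem hx hz, lt_of_le_of_lt (height_mul_le hx hz).1 hhx⟩
    · intro x hx heq
      rw [Jset_eq hx] at heq
      set ν := height x with hν
      have hxI : x ∈ Iset n ν := ⟨hx, le_refl _⟩
      have hxK : x ∈ Kset n μ := heq ▸ hxI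
      have hνμ : ν < μ := hxK.2
      set t := max (μ / 2) ((ν + μ) / 2) with ht
      have ht0 : 0 ≤ t := le_trans (by linarith) (le_max_left _ _)
      have ht1 : t ≤ (n : ℝ) - 1 := max_le (by linarith) (by linarith)
      have htν : ν < t := lt_of_lt_of_le (by linarith) (le_max_right _ _)
      have htμ : t < μ := max_lt (by linarith) (by linarith)
      obtain ⟨y, hy, hty⟩ := exists_height hn ht0 ht1
      have hyK : y ∈ Kset n μ := ⟨hy, by rw [hty]; exact htμ⟩
      have hyI : y ∈ Iset n ν := heq ▸ hyK
      have hle2 : height y ≤ ν := hyI.2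
      rw [hty] at hle2
      linarith
  · -- part (d): classification of ideals
    intro I hI
    obtain ⟨hne, hsub, hcl⟩ := hI
    set S : Set ℝ := height '' I with hS
    have hSne : S.Nonempty := hne.image _
    have hbd : ∀ s ∈ S, s ≤ (n : ℝ) - 1 := by
      rintro s ⟨y, hy, rfl⟩
      rcases height_cases (hsub hy) with h | ⟨-, h⟩
      · rw [h]
        have h2 : (2 : ℝ) ≤ (n : ℝ) := by exact_mod_cast hn
        linarith
      · exact h
    have hSbdd : BddAbove S := ⟨(n : ℝ) - 1, hbd⟩
    set μ := sSup S with hμ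
    have hle : ∀ y ∈ I, height y ≤ μ := fun y hy => le_csSup hSbdd ⟨y, hy, rfl⟩
    have hμub : μ ≤ (n : ℝ) - 1 := csSup_le hSne hbd
    by_cases hatt : ∃ y ∈ I, height y = μ
    · left
      obtain ⟨y, hyI, hyμ⟩ := hatt
      refine ⟨μ, ?_, ?_⟩
      · rcases height_cases (hsub hyI) with h | ⟨h0, h1⟩
        · left; rw [← hyμ]; exact h
        · right; rw [← hyμ]; exact ⟨h0, h1⟩
      · ext w
        constructor
        · intro hw; exact ⟨hsub hw, hle w hw⟩
        · rintro ⟨hw, hwle⟩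
          exact ideal_down ⟨hne, hsub, hcl⟩ hyI hw (hwle.trans hyμ.ge)
    · right
      push_neg at hatt
      have hlt : ∀ y ∈ I, height y < μ := fun y hy =>
        lt_of_le_of_ne (hle y hy) (hatt y hy)
      have hμ0 : 0 < μ := by
        by_contra hc
        push_neg at hc
        have hall : ∀ s ∈ S, s ≤ -1 := by
          rintro s ⟨y, hy, rfl⟩
          rcases height_cases (hsub hy) with h | ⟨h0, -⟩
          · exact h.le
          · exfalso; have := hlt y hy; linarith
        have hμm : μ ≤ -1 := csSup_le hSne hall
        obtain ⟨y₀, hy₀⟩ := hne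
        have h1 := hlt y₀ hy₀
        have h2 := height_ge (hsub hy₀)
        linarith
      refine ⟨μ, hμ0, hμub, ?_⟩
      ext w
      constructor
      · intro hw; exact ⟨hsub hw, hlt w hw⟩
      · rintro ⟨hw, hwlt⟩
        obtain ⟨s, ⟨y, hyI, rfl⟩, hws⟩ := exists_lt_of_lt_csSup hSne hwlt
        exact ideal_down ⟨hne, hsub, hcl⟩ hyI hw hws.le
end
end

section
/- Let j ≥ 1 be a natural number and let x = (k,d,m) be a nonzero element of M̄_n. Set d' = d/j, k' = k + (j−1)·min(0,d'), m' = m + (j−1)·max(0,d'). Then y = (k',d',m') is a well-defined nonzero element of M̄_n, the j-th power of y equals x, and y is the unique element of M̄_n whose j-th power equals x. Thus every nonzero element of M̄_n has a unique j-th root in M̄_n. -/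
/-! Powers of a nonzero triple have a closed form: as long as the interval `[k'', m'']` stays
nonempty, `(a, e, b)^(t+1) = (a - t·min(0,e), (t+1)·e, b - t·max(0,e))`. Hence a `j`-th root
`(a, e, b)` of `(k, d, m)` must have `e = d / j`, and then `a` and `b` are forced; conversely the
scaling `j · min(0, d/j) = min(0, d)` turns the constraints of `M̄_n` on `(k, d, m)` into those on
the root. -/

noncomputable section

lemma pw_none (t : ℕ) : pw none t = none := by
  induction t with
  | zero => rfl
  | succ t ih => rw [pw, ih]; rfl

lemma max_sub_mul_min_zero (a e : ℝ) {t : ℝ} (ht : 0 ≤ t) :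
    max (a - t * min 0 e) (a - (t + 1) * e) = a - (t + 1) * min 0 e := by
  rcases le_total 0 e with he | he
  · simp only [min_eq_left he, mul_zero, sub_zero]
    exact max_eq_left (by nlinarith)
  · rw [min_eq_right he, max_eq_right (by nlinarith)]

lemma min_sub_mul_max_zero (b e : ℝ) {t : ℝ} (ht : 0 ≤ t) :
    min (b - t * max 0 e) (b - (t + 1) * e) = b - (t + 1) * max 0 e := by
  rcases le_total 0 e with he | he
  · rw [max_eq_right he, min_eq_right (by nlinarith)]
  · simp only [max_eq_left he, mul_zero, sub_zero]
    exact min_eq_left (by nlinarith)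

lemma pw_some {a b : ℝ} (e : ℝ) (hab : a ≤ b) (t : ℕ) :
    pw (some (a, e, b)) t =
      if a - t * min 0 e ≤ b - t * max 0 e then
        some (a - t * min 0 e, (t + 1) * e, b - t * max 0 e)
      else none := by
  induction t with
  | zero => simp [pw, hab]
  | succ t ih =>
    have ht : (0 : ℝ) ≤ t := t.cast_nonneg
    have hmin : min 0 e ≤ 0 := min_le_left 0 e
    have hmax : 0 ≤ max 0 e := le_max_left 0 e
    rw [pw, ih]
    push_cast
    by_cases hcond : a - t * min 0 e ≤ b - t * max 0 e
    · rw [if_pos hcond, mul, max_sub_mul_min_zero a e ht, min_sub_mul_max_zero b e ht,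
        show ((t : ℝ) + 1) * e + e = (t + 1 + 1) * e by ring]
    · rw [if_neg hcond, if_neg (by linarith)]
      rfl

theorem stmt17_general (n : ℕ) (j : ℕ) (hj : 1 ≤ j) (k d m : ℝ)
    (hx : inM n (some (k, d, m))) :
    inM n (some (k + ((j : ℝ) - 1) * min 0 (d / (j : ℝ)), d / (j : ℝ),
      m + ((j : ℝ) - 1) * max 0 (d / (j : ℝ)))) ∧
    pw (some (k + ((j : ℝ) - 1) * min 0 (d / (j : ℝ)), d / (j : ℝ),
      m + ((j : ℝ) - 1) * max 0 (d / (j : ℝ)))) (j - 1) = some (k, d, m) ∧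
    (∀ y : El, inM n y → pw y (j - 1) = some (k, d, m) →
      y = some (k + ((j : ℝ) - 1) * min 0 (d / (j : ℝ)), d / (j : ℝ),
        m + ((j : ℝ) - 1) * max 0 (d / (j : ℝ)))) := by
  obtain ⟨hk, hkm, hm⟩ := hx
  have hj_pos : (0 : ℝ) < j := by exact_mod_cast hj
  have hcast : ((j - 1 : ℕ) : ℝ) = j - 1 := by rw [Nat.cast_sub hj, Nat.cast_one]
  have hd : (j : ℝ) * (d / j) = d := mul_div_cancel₀ d hj_pos.ne'
  have hmin : (j : ℝ) * min 0 (d / j) = min 0 d := by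
    rw [mul_min_of_nonneg _ _ hj_pos.le, mul_zero, hd]
  have hmax : (j : ℝ) * max 0 (d / j) = max 0 d := by
    rw [mul_max_of_nonneg _ _ hj_pos.le, mul_zero, hd]
  have hj1 : (0 : ℝ) ≤ j - 1 := by linarith [show (1 : ℝ) ≤ j by exact_mod_cast hj]
  have hroot : k + (j - 1) * min 0 (d / j) ≤ m + (j - 1) * max 0 (d / j) := by
    linarith [mul_nonpos_of_nonneg_of_nonpos hj1 (min_le_left 0 (d / j)),
      mul_nonneg hj1 (le_max_left 0 (d / j))]
  refine ⟨⟨by linarith, hroot, by linarith⟩, ?_, ?_⟩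
  · rw [pw_some _ hroot, hcast, if_pos (by linarith), sub_add_cancel, hd]
    simp only [add_sub_cancel_right]
  · rintro (_ | ⟨a, e, b⟩) hy hpow
    · simp [pw_none] at hpow
    rw [pw_some e hy.2.1, hcast, sub_add_cancel] at hpow
    split_ifs at hpow
    simp only [Option.some.injEq, Prod.mk.injEq] at hpow
    obtain ⟨rfl, rfl, rfl⟩ := hpow
    rw [mul_div_cancel_left₀ e hj_pos.ne']
    simp only [sub_add_cancel]

/-- every nonzero x = (k,d,m) ∈ M̄_n has a unique j-th root
(j ≥ 1), namely y = (k + (j-1)·min(0,d/j), d/j, m + (j-1)·max(0,d/j)).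
Here `pw y (j-1)` is the j-th power of y. -/
theorem stmt17 (n : ℕ) (hn : 2 ≤ n) (j : ℕ) (hj : 1 ≤ j) (k d m : ℝ)
    (hx : inM n (some (k, d, m))) :
    inM n (some (k + ((j : ℝ) - 1) * min 0 (d / (j : ℝ)), d / (j : ℝ),
      m + ((j : ℝ) - 1) * max 0 (d / (j : ℝ)))) ∧
    pw (some (k + ((j : ℝ) - 1) * min 0 (d / (j : ℝ)), d / (j : ℝ),
      m + ((j : ℝ) - 1) * max 0 (d / (j : ℝ)))) (j - 1) = some (k, d, m) ∧
    (∀ y : El, inM n y → pw y (j - 1) = some (k, d, m) →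
      y = some (k + ((j : ℝ) - 1) * min 0 (d / (j : ℝ)), d / (j : ℝ),
        m + ((j : ℝ) - 1) * max 0 (d / (j : ℝ)))) :=
  stmt17_general n j hj k d m hx
end
end

section
/- Let B̄_n = {0} ∪ {(k,d,k) ∈ M̄_n : 1 − min(0,d) ≤ k ≤ n − max(0,d)}. Then B̄_n is a Brandt semigroup; concretely: (a) B̄_n is closed under the multiplication of M̄_n and under the transpose x ↦ x^T, so it is an inverse subsemigroup of M̄_n; (b) every nonzero idempotent of B̄_n is primitive: for nonzero x, y ∈ B̄_n, if x = (x·x^T)·y then x = y; (c) B̄_n is 0-simple: if I ⊆ B̄_n is nonempty, satisfies z·x ∈ I and x·z ∈ I for all x ∈ I and z ∈ B̄_n, and I ≠ {0}, then I = B̄_n. -/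
noncomputable section

/-- Membership in B̄_n = {0} ∪ {(k,d,k) ∈ M̄_n}. -/
def inB (n : ℕ) : El → Prop
  | none => True
  | some (k, d, m) => m = k ∧ 1 - min 0 d ≤ k ∧ k ≤ (n : ℝ) - max 0 d

/-- Bounds extracted from membership constraints. -/
lemma aux_bounds {k d N : ℝ} (h1 : 1 - min 0 d ≤ k) (h2 : k ≤ N - max 0 d) :
    1 ≤ k ∧ k ≤ N ∧ 1 ≤ k + d ∧ k + d ≤ N := by
  rcases le_total 0 d with h | h
  · rw [min_eq_left h] at h1; rw [max_eq_right h] at h2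
    refine ⟨by linarith, by linarith, by linarith, by linarith⟩
  · rw [min_eq_right h] at h1; rw [max_eq_left h] at h2
    refine ⟨by linarith, by linarith, by linarith, by linarith⟩

/-- Sufficient condition for membership in B̄_n. -/
lemma aux_memB {k e N : ℝ} (h1 : 1 ≤ k) (h2 : k ≤ N) (h3 : 1 ≤ k + e)
    (h4 : k + e ≤ N) : 1 - min 0 e ≤ k ∧ k ≤ N - max 0 e := by
  constructor
  · rcases le_total 0 e with h | h
    · rw [min_eq_left h]; linarith
    · rw [min_eq_right h]; linarith
  · rcases le_total 0 e with h | h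
    · rw [max_eq_right h]; linarith
    · rw [max_eq_left h]; linarith

/-- B̄_n is a Brandt semigroup: (a) it is closed under
multiplication and transpose (so it is an inverse subsemigroup of M̄_n);
(b) every nonzero idempotent is primitive; (c) it is 0-simple. -/
theorem stmt18 (n : ℕ) (hn : 2 ≤ n) :
    (∀ x y : El, inB n x → inB n y → inB n (mul x y)) ∧
    (∀ x : El, inB n x → inB n (transp x)) ∧
    (∀ x y : El, inB n x → inB n y → x ≠ none → y ≠ none →
      x = mul (mul x (transp x)) y → x = y) ∧
    (∀ I : Set El, I.Nonempty → I ⊆ {x : El | inB n x} →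
      (∀ x ∈ I, ∀ z : El, inB n z → mul z x ∈ I ∧ mul x z ∈ I) →
      I ≠ {none} → I = {x : El | inB n x}) := by
  have mulB : ∀ x y : El, inB n x → inB n y → inB n (mul x y) := by
    rintro (_ | ⟨k, d, m⟩) (_ | ⟨k', d', m'⟩) hx hy <;> try trivial
    obtain ⟨hm, hx1, hx2⟩ := hx; subst hm
    obtain ⟨hm', hy1, hy2⟩ := hy; subst hm'
    simp only [mul]
    split_ifs with hc
    · have h1 : m' - d ≤ m := le_trans (le_max_right _ _) (le_trans hc (min_le_left _ _))
      have h2 : m ≤ m' - d := le_trans (le_max_left _ _) (le_trans hc (min_le_right _ _))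
      have heq : m' - d = m := le_antisymm h1 h2
      rw [heq, max_self, min_self]
      obtain ⟨b1, b2, b3, b4⟩ := aux_bounds hx1 hx2
      obtain ⟨c1, c2, c3, c4⟩ := aux_bounds hy1 hy2
      exact ⟨rfl, aux_memB b1 b2 (by linarith) (by linarith)⟩
    · trivial
  have transpB : ∀ x : El, inB n x → inB n (transp x) := by
    rintro (_ | ⟨k, d, m⟩) hx <;> try trivial
    obtain ⟨hm, hx1, hx2⟩ := hx; subst hm
    obtain ⟨b1, b2, b3, b4⟩ := aux_bounds hx1 hx2
    exact ⟨rfl, aux_memB b3 b4 (by linarith) (by linarith)⟩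
  refine ⟨mulB, transpB, ?_, ?_⟩
  · -- primitivity
    intro x y hx hy hxne hyne h
    obtain ⟨⟨k, d, m⟩, rfl⟩ : ∃ p, x = some p := Option.ne_none_iff_exists'.mp hxne
    obtain ⟨⟨k', d', m'⟩, rfl⟩ : ∃ p, y = some p := Option.ne_none_iff_exists'.mp hyne
    obtain ⟨hm, hx1, hx2⟩ := hx; subst hm
    obtain ⟨hm', hy1, hy2⟩ := hy; subst hm'
    have e1 : m + d - d = m := by ring
    have e2 : d + -d = 0 := by ring
    simp only [mul, transp, e1, e2, max_self, min_self, le_refl, if_true, sub_zero,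
      zero_add] at h
    split_ifs at h with hc
    · simp only [Option.some.injEq, Prod.mk.injEq] at h
      obtain ⟨h1, h2, h3⟩ := h
      have hmm : m = m' := by
        refine le_antisymm ?_ ?_
        · rw [h3]; exact min_le_right _ _
        · rw [h1]; exact le_max_right _ _
      rw [h2, hmm]
    
  · -- 0-simplicity
    intro I hne hsub hcl hI
    obtain ⟨x, hxI, hxne⟩ : ∃ x ∈ I, x ≠ none := by
      by_contra hcon
      push_neg at hcon
      apply hI
      ext z
      simp only [Set.mem_singleton_iff]
      constructor
      · exact fun hz => hcon z hz
      · rintro rfl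
        obtain ⟨w, hw⟩ := hne
        rwa [hcon w hw] at hw
    obtain ⟨⟨k, d, m⟩, rfl⟩ : ∃ p, x = some p := Option.ne_none_iff_exists'.mp hxne
    obtain ⟨hm, hx1, hx2⟩ := hsub hxI; subst hm
    obtain ⟨b1, b2, b3, b4⟩ := aux_bounds hx1 hx2
    have hnoneI : none ∈ I := by
      have := (hcl _ hxI none trivial).2
      simpa [mul] using this
    ext y
    simp only [Set.mem_setOf_eq]
    constructor
    · exact fun hy => hsub hy
    · intro hy
      cases y with
      | none => exact hnoneI
      | some p =>
        obtain ⟨k', d', m'⟩ := p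
        obtain ⟨hm', hy1, hy2⟩ := hy; subst hm'
        obtain ⟨c1, c2, c3, c4⟩ := aux_bounds hy1 hy2
        have haB : inB n (some (m', m - m', m')) :=
          ⟨rfl, aux_memB c1 c2 (by linarith) (by linarith)⟩
        have hbB : inB n (some (m + d, d' - d - m + m', m + d)) :=
          ⟨rfl, aux_memB b3 b4 (by linarith) (by linarith)⟩
        have hax : mul (some (m', m - m', m')) (some (m, d, m)) =
            some (m', m - m' + d, m') := by
          have e1 : m - (m - m') = m' := by ring
          simp [mul, e1]
        have haxI : mul (some (m', m - m', m')) (some (m, d, m)) ∈ I :=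
          (hcl _ hxI _ haB).1
        rw [hax] at haxI
        have hfin : mul (some (m', m - m' + d, m'))
            (some (m + d, d' - d - m + m', m + d)) = some (m', d', m') := by
          have e1 : m + d - (m - m' + d) = m' := by ring
          have e2 : m - m' + d + (d' - d - m + m') = d' := by ring
          simp [mul, e1, e2]
        have := (hcl _ haxI _ hbB).2
        rwa [hfin] at this
end
end
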